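/- arXiv:1706.04186 — 6 statements merged into one kernel-verified Lean document; each statement's English description precedes it below -/
import Mathlib

section
/- If a, b, c are positive integers that are pairwise coprime and a^(2k+1) + b^(2k+1) = c^(2k+1) for some natural number k, then a + b, c - a, and c - b are pairwise coprime. -/
/-!
Each of the three numbers divides a power of one of `a`, `b`, `c`: `c - a ∣ cⁿ - aⁿ = bⁿ`,
`c - b ∣ aⁿ`, and `a + b ∣ aⁿ + bⁿ = cⁿ` because `n = 2k + 1` is odd. Since `a`, `b`, `c` are
pairwise coprime, so are their powers, hence so are the three divisors.
-/

theorem Nat.Coprime.of_dvd_pow_of_dvd_pow {p q x y m n : ℕ} (hpq : p.Coprime q)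
    (hx : x ∣ p ^ m) (hy : y ∣ q ^ n) : x.Coprime y :=
  ((hpq.pow m n).coprime_dvd_left hx).coprime_dvd_right hy

theorem Nat.sub_dvd_pow_of_pow_add_pow_eq {a b c n : ℕ} (h : a ^ n + b ^ n = c ^ n) :
    c - a ∣ b ^ n := by
  have hdiff : c ^ n - a ^ n = b ^ n := by omega
  exact hdiff ▸ Nat.sub_dvd_pow_sub_pow c a n

theorem Odd.nat_add_dvd_pow_of_pow_add_pow_eq {a b c n : ℕ} (hn : Odd n)
    (h : a ^ n + b ^ n = c ^ n) : a + b ∣ c ^ n :=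
  h ▸ hn.nat_add_dvd_pow_add_pow a b

theorem stmt_1_general (a b c k : ℕ)
    (hab : Nat.Coprime a b) (hbc : Nat.Coprime b c) (hac : Nat.Coprime a c)
    (h : a ^ (2 * k + 1) + b ^ (2 * k + 1) = c ^ (2 * k + 1)) :
    Nat.Coprime (a + b) (c - a) ∧ Nat.Coprime (a + b) (c - b) ∧
      Nat.Coprime (c - a) (c - b) := by
  have hsum : a + b ∣ c ^ (2 * k + 1) :=
    (odd_two_mul_add_one k).nat_add_dvd_pow_of_pow_add_pow_eq h
  have hca : c - a ∣ b ^ (2 * k + 1) := Nat.sub_dvd_pow_of_pow_add_pow_eq h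
  have hcb : c - b ∣ a ^ (2 * k + 1) :=
    Nat.sub_dvd_pow_of_pow_add_pow_eq ((add_comm _ _).trans h)
  exact ⟨hbc.symm.of_dvd_pow_of_dvd_pow hsum hca, hac.symm.of_dvd_pow_of_dvd_pow hsum hcb,
    hab.symm.of_dvd_pow_of_dvd_pow hca hcb⟩

theorem stmt_1 (a b c k : ℕ) (ha : 0 < a) (hb : 0 < b) (hc : 0 < c)
    (hab : Nat.Coprime a b) (hbc : Nat.Coprime b c) (hac : Nat.Coprime a c)
    (h : a ^ (2 * k + 1) + b ^ (2 * k + 1) = c ^ (2 * k + 1)) :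
    Nat.Coprime (a + b) (c - a) ∧ Nat.Coprime (a + b) (c - b) ∧
      Nat.Coprime (c - a) (c - b) :=
  stmt_1_general a b c k hab hbc hac h
end

section
/- For integers a and b and natural number k ≥ 1, the quotient (a^(2k+1) + b^(2k+1))/(a+b) is congruent to (2k+1) * a^(2k) modulo (a+b); equivalently, (a^(2k+1) + b^(2k+1))/(a+b) ≡ (2k+1) b^(2k) (mod a+b). -/
/-! Write `c = a + b`. Expanding `b ^ n = (c - a) ^ n` to first order in `c` gives, for odd `n`,
`a ^ n + b ^ n ≡ n c a ^ (n - 1) (mod c ^ 2)`; the left side is `c q`, and cancelling one factor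
`c ≠ 0` leaves `q ≡ n a ^ (n - 1) (mod c)`. Exchanging `a` and `b` gives the second congruence. -/

theorem sq_add_dvd_pow_add_pow_sub_of_odd {R : Type*} [CommRing R] (a b : R) {n : ℕ}
    (hn : Odd n) : (a + b) ^ 2 ∣ a ^ n + b ^ n - (a + b) * (n * a ^ (n - 1)) := by
  have h := sq_dvd_add_pow_sub_sub (a + b) (-a) n
  rw [neg_add_cancel_left, hn.neg_pow, (Nat.Odd.sub_odd hn odd_one).neg_pow] at h
  convert h using 1
  ring

theorem Int.modEq_of_sq_dvd_mul_sub_mul {c q t : ℤ} (hc : c ≠ 0) (h : c ^ 2 ∣ c * q - c * t) :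
    q ≡ t [ZMOD c] := by
  rw [← mul_sub, sq, mul_dvd_mul_iff_left hc] at h
  exact (Int.modEq_iff_dvd.mpr h).symm

theorem stmt_3_general (a b : ℤ) (k : ℕ) (hab : a + b ≠ 0) (q : ℤ)
    (hq : a ^ (2 * k + 1) + b ^ (2 * k + 1) = (a + b) * q) :
    q ≡ (2 * k + 1) * a ^ (2 * k) [ZMOD (a + b)] ∧
      q ≡ (2 * k + 1) * b ^ (2 * k) [ZMOD (a + b)] := by
  have hodd : Odd (2 * k + 1) := odd_two_mul_add_one k
  have ha := sq_add_dvd_pow_add_pow_sub_of_odd a b hodd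
  have hb := sq_add_dvd_pow_add_pow_sub_of_odd b a hodd
  rw [add_comm b a, add_comm (b ^ _), hq] at hb
  rw [hq] at ha
  push_cast at ha hb
  exact ⟨Int.modEq_of_sq_dvd_mul_sub_mul hab ha, Int.modEq_of_sq_dvd_mul_sub_mul hab hb⟩

theorem stmt_3 (a b : ℤ) (k : ℕ) (hk : 1 ≤ k) (hab : a + b ≠ 0) (q : ℤ)
    (hq : a ^ (2 * k + 1) + b ^ (2 * k + 1) = (a + b) * q) :
    q ≡ (2 * k + 1) * a ^ (2 * k) [ZMOD (a + b)] ∧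
      q ≡ (2 * k + 1) * b ^ (2 * k) [ZMOD (a + b)] :=
  stmt_3_general a b k hab q hq
end

section
/- Let p be an odd prime and a, b coprime positive integers with p not dividing a + b. If a^p + b^p = c^p for a positive integer c, then there exist coprime positive integers c1, c2 with a + b = c1^p, (a^p + b^p)/(a+b) = c2^p, and c = c1 * c2. -/
/-!
Write `q = (a^p + b^p)/(a + b) = ∑ a^i (-b)^(p-1-i)`. Since `a ≡ -b` modulo `a + b`, this gives
`q ≡ p b^(p-1)` modulo `a + b`, so `gcd(a + b, q)` divides `p b^(p-1)`; being coprime to `b`, it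
divides `p`, and as `p ∤ a + b` the two factors of `(a + b) q = c^p` are coprime, hence both `p`-th
powers.
-/

open Finset

lemma Odd.geom_sum₂_neg_mul_add {R : Type*} [CommRing R] (x y : R) {n : ℕ} (hn : Odd n) :
    (∑ i ∈ range n, x ^ i * (-y) ^ (n - 1 - i)) * (x + y) = x ^ n + y ^ n := by
  simpa [hn.neg_pow, sub_neg_eq_add] using geom_sum₂_mul x (-y) n

lemma Odd.natCast_add_pow_div_add {a b n : ℕ} (hn : Odd n) (hab : a + b ≠ 0) :
    (((a ^ n + b ^ n) / (a + b) : ℕ) : ℤ) =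
      ∑ i ∈ range n, (a : ℤ) ^ i * (-(b : ℤ)) ^ (n - 1 - i) := by
  rw [Int.natCast_div]
  push_cast
  rw [← hn.geom_sum₂_neg_mul_add, Int.mul_ediv_cancel _ (by exact_mod_cast hab)]

lemma Nat.Coprime.gcd_add_pow_div_add_dvd {a b n : ℕ} (hab : a.Coprime b) (hn : Odd n) :
    Nat.gcd (a + b) ((a ^ n + b ^ n) / (a + b)) ∣ n := by
  have hab0 : a + b ≠ 0 := by
    intro h
    obtain ⟨rfl, rfl⟩ := Nat.add_eq_zero_iff.mp h
    simp at hab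
  set d := Nat.gcd (a + b) ((a ^ n + b ^ n) / (a + b))
  have hd_sub : (d : ℤ) ∣ (a : ℤ) - -(b : ℤ) := by
    rw [sub_neg_eq_add]
    exact_mod_cast Nat.gcd_dvd_left _ _
  have hd_sum : (d : ℤ) ∣ ∑ i ∈ range n, (a : ℤ) ^ i * (-(b : ℤ)) ^ (n - 1 - i) := by
    rw [← hn.natCast_add_pow_div_add hab0]
    exact_mod_cast Nat.gcd_dvd_right _ _
  have hd_nb : d ∣ n * b ^ (n - 1) := by
    have := Int.natCast_dvd.mp ((dvd_geom_sum₂_iff_of_dvd_sub hd_sub).mp hd_sum)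
    simpa [Int.natAbs_mul, Int.natAbs_pow] using this
  have hdb : d.Coprime b :=
    (coprime_add_self_left.mpr hab).coprime_dvd_left (Nat.gcd_dvd_left _ _)
  exact (hdb.pow_right _).dvd_of_dvd_mul_right hd_nb

lemma Nat.Coprime.coprime_add_pow_div_add {a b p : ℕ} (hab : a.Coprime b) (hp : p.Prime)
    (hodd : Odd p) (hndvd : ¬ p ∣ a + b) : (a + b).Coprime ((a ^ p + b ^ p) / (a + b)) :=
  ((Nat.dvd_prime hp).mp (hab.gcd_add_pow_div_add_dvd hodd)).resolve_right
    fun h => hndvd (h ▸ Nat.gcd_dvd_left _ _)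

lemma Nat.exists_coprime_pow_eq_of_mul_eq_pow {x y c n : ℕ} (hn : n ≠ 0) (hxy : x.Coprime y)
    (h : x * y = c ^ n) : ∃ c1 c2 : ℕ, c1.Coprime c2 ∧ x = c1 ^ n ∧ y = c2 ^ n ∧ c = c1 * c2 := by
  obtain ⟨c1, rfl⟩ := exists_eq_pow_of_mul_eq_pow (Nat.isUnit_iff.mpr hxy) h
  obtain ⟨c2, rfl⟩ :=
    exists_eq_pow_of_mul_eq_pow (Nat.isUnit_iff.mpr hxy.symm) ((mul_comm _ _).trans h)
  refine ⟨c1, c2, ?_, rfl, rfl, Nat.pow_left_injective hn (by simp only [mul_pow, h])⟩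
  exact (Nat.coprime_pow_left_iff (Nat.pos_of_ne_zero hn) _ _).mp
    ((Nat.coprime_pow_right_iff (Nat.pos_of_ne_zero hn) _ _).mp hxy)

theorem stmt_5_general (p a b c : ℕ) (hp : p.Prime) (hodd : Odd p)
    (hc : 0 < c) (hab : Nat.Coprime a b)
    (hndvd : ¬ p ∣ a + b) (h : a ^ p + b ^ p = c ^ p) :
    ∃ c1 c2 : ℕ, 0 < c1 ∧ 0 < c2 ∧ Nat.Coprime c1 c2 ∧
      a + b = c1 ^ p ∧ (a ^ p + b ^ p) / (a + b) = c2 ^ p ∧ c = c1 * c2 := by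
  have hmul : (a + b) * ((a ^ p + b ^ p) / (a + b)) = c ^ p := by
    rw [Nat.mul_div_cancel' (hodd.nat_add_dvd_pow_add_pow a b), h]
  obtain ⟨c1, c2, hcop, h1, h2, rfl⟩ := Nat.exists_coprime_pow_eq_of_mul_eq_pow hp.ne_zero
    (hab.coprime_add_pow_div_add hp hodd hndvd) hmul
  exact ⟨c1, c2, Nat.pos_of_ne_zero (left_ne_zero_of_mul hc.ne'),
    Nat.pos_of_ne_zero (right_ne_zero_of_mul hc.ne'), hcop, h1, h2, rfl⟩

theorem stmt_5 (p a b c : ℕ) (hp : p.Prime) (hodd : Odd p)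
    (ha : 0 < a) (hb : 0 < b) (hc : 0 < c) (hab : Nat.Coprime a b)
    (hndvd : ¬ p ∣ a + b) (h : a ^ p + b ^ p = c ^ p) :
    ∃ c1 c2 : ℕ, 0 < c1 ∧ 0 < c2 ∧ Nat.Coprime c1 c2 ∧
      a + b = c1 ^ p ∧ (a ^ p + b ^ p) / (a + b) = c2 ^ p ∧ c = c1 * c2 :=
  stmt_5_general p a b c hp hodd hc hab hndvd h
end

section
/- Let a, b, c be pairwise coprime positive integers with a even, b and c odd, and a^(2k) + b^(2k) = c^(2k) for some k ≥ 1. Then there exist coprime positive integers A1, A2 with c^k - b^k = 2^(2k-1) * A1^(2k) and c^k + b^k = 2 * A2^(2k) (up to swapping the powers of 2), and a = 2 * A1 * A2. -/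
/-!
The factors of `(c^k - b^k) (c^k + b^k) = a^(2k)` are both even, and their halves `p`, `q` are
coprime (their sum and difference are the coprime `c^k`, `b^k`) and of opposite parity
(`p + q = c^k` is odd). If `q` is the odd one, then `q` and `4p` are coprime with product
`a^(2k)`, hence both are `2k`-th powers; the root of `4p` is even, say `2 A₁`, which gives
`2p = 2^(2k-1) A₁^(2k)`.
-/

theorem Nat.Coprime.exists_eq_pow_of_mul_eq_pow {x y a m : ℕ} (hm : m ≠ 0)
    (hxy : x.Coprime y) (h : x * y = a ^ m) :
    ∃ u v, x = u ^ m ∧ y = v ^ m ∧ u.Coprime v ∧ a = u * v := by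
  obtain ⟨u, rfl⟩ := _root_.exists_eq_pow_of_mul_eq_pow (Nat.isUnit_iff.mpr hxy) h
  obtain ⟨v, rfl⟩ :=
    _root_.exists_eq_pow_of_mul_eq_pow (Nat.isUnit_iff.mpr hxy.symm) ((mul_comm _ _).trans h)
  have hm' : 0 < m := Nat.pos_of_ne_zero hm
  refine ⟨u, v, rfl, rfl, ?_, Nat.pow_left_injective hm ?_⟩
  · exact (Nat.coprime_pow_right_iff hm' _ _).mp ((Nat.coprime_pow_left_iff hm' _ _).mp hxy)
  · simpa only [mul_pow] using h.symm

theorem Nat.Coprime.exists_coprime_halves_of_odd {x y : ℕ} (hxy : x.Coprime y) (hx : Odd x)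
    (hy : Odd y) (hle : x ≤ y) :
    ∃ p q, y - x = 2 * p ∧ y + x = 2 * q ∧ p.Coprime q ∧ Odd (p + q) := by
  obtain ⟨p, hp⟩ : Even (y - x) := Nat.Odd.sub_odd hy hx
  have hy' : y = x + 2 * p := by omega
  refine ⟨p, p + x, by omega, by omega, ?_, by rwa [show p + (p + x) = y by omega]⟩
  rw [hy', Nat.coprime_self_add_right] at hxy
  exact Nat.coprime_self_add_right.mpr hxy.coprime_mul_left_right.symm

theorem Nat.exists_pow_split_of_two_mul_mul_two_mul_eq_pow {p q a n : ℕ} (hn : 0 < n)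
    (ha : a ≠ 0) (hpq : p.Coprime q) (hq : Odd q) (h : 2 * p * (2 * q) = a ^ (2 * n)) :
    ∃ A1 A2, 0 < A1 ∧ 0 < A2 ∧ A1.Coprime A2 ∧ 2 * p = 2 ^ (2 * n - 1) * A1 ^ (2 * n) ∧
      2 * q = 2 * A2 ^ (2 * n) ∧ a = 2 * A1 * A2 := by
  have hcop : (2 ^ 2 * p).Coprime q := ((Nat.coprime_two_left.mpr hq).pow_left 2).mul_left hpq
  obtain ⟨u, A2, hu, rfl, hcop', rfl⟩ :=
    hcop.exists_eq_pow_of_mul_eq_pow (a := a) (m := 2 * n) (by omega) (by rw [← h]; ring)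
  obtain ⟨A1, rfl⟩ : 2 ∣ u :=
    Nat.prime_two.dvd_of_dvd_pow (n := 2 * n)
      (hu ▸ dvd_mul_of_dvd_left (dvd_pow_self 2 two_ne_zero) p)
  have h2p : 2 * (2 * p) = 2 * (2 ^ (2 * n - 1) * A1 ^ (2 * n)) := by
    calc 2 * (2 * p) = (2 * A1) ^ (2 * n) := by rw [← hu]; ring
      _ = 2 ^ (2 * n - 1 + 1) * A1 ^ (2 * n) := by rw [Nat.sub_add_cancel (by omega), mul_pow]
      _ = _ := by ring
  refine ⟨A1, A2, Nat.pos_of_ne_zero ?_, Nat.pos_of_ne_zero ?_, hcop'.coprime_mul_left,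
    Nat.eq_of_mul_eq_mul_left two_pos h2p, rfl, by ring⟩
  all_goals rintro rfl; simp at ha

theorem stmt_13_general (a b c k : ℕ) (ha : 0 < a) (hk : 1 ≤ k) (hbc : Nat.Coprime b c)
    (hbodd : Odd b) (hcodd : Odd c)
    (h : a ^ (2 * k) + b ^ (2 * k) = c ^ (2 * k)) :
    ∃ A1 A2 : ℕ, 0 < A1 ∧ 0 < A2 ∧ Nat.Coprime A1 A2 ∧
      ((c ^ k - b ^ k = 2 ^ (2 * k - 1) * A1 ^ (2 * k) ∧
          c ^ k + b ^ k = 2 * A2 ^ (2 * k)) ∨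
        (c ^ k - b ^ k = 2 * A1 ^ (2 * k) ∧
          c ^ k + b ^ k = 2 ^ (2 * k - 1) * A2 ^ (2 * k))) ∧
      a = 2 * A1 * A2 := by
  rw [pow_mul', pow_mul', pow_mul'] at h
  have hle : b ^ k ≤ c ^ k :=
    (Nat.pow_le_pow_iff_left two_ne_zero).mp (h ▸ Nat.le_add_left _ _)
  obtain ⟨p, q, hp, hq, hpq, hodd⟩ :=
    (hbc.pow k k).exists_coprime_halves_of_odd hbodd.pow hcodd.pow hle
  have hprod : 2 * p * (2 * q) = (a ^ k) ^ 2 := by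
    rw [← hp, ← hq, mul_comm (c ^ k - b ^ k), ← Nat.sq_sub_sq, ← h, Nat.add_sub_cancel]
  rw [← pow_mul'] at hprod
  rcases Nat.even_or_odd q with hq_even | hq_odd
  · obtain ⟨A2, A1, hA2, hA1, hcop, hq', hp', rfl⟩ :=
      Nat.exists_pow_split_of_two_mul_mul_two_mul_eq_pow hk ha.ne' hpq.symm
        (Nat.odd_add.mp hodd |>.mpr hq_even) (by rw [← hprod]; ring)
    exact ⟨A1, A2, hA1, hA2, hcop.symm, Or.inr ⟨hp ▸ hp', hq ▸ hq'⟩, by ring⟩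
  · obtain ⟨A1, A2, hA1, hA2, hcop, hp', hq', rfl⟩ :=
      Nat.exists_pow_split_of_two_mul_mul_two_mul_eq_pow hk ha.ne' hpq hq_odd hprod
    exact ⟨A1, A2, hA1, hA2, hcop, Or.inl ⟨hp ▸ hp', hq ▸ hq'⟩, rfl⟩

theorem stmt_13 (a b c k : ℕ) (ha : 0 < a) (hb : 0 < b) (hc : 0 < c)
    (hk : 1 ≤ k) (hab : Nat.Coprime a b) (hbc : Nat.Coprime b c)
    (hac : Nat.Coprime a c) (haeven : Even a) (hbodd : Odd b) (hcodd : Odd c)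
    (h : a ^ (2 * k) + b ^ (2 * k) = c ^ (2 * k)) :
    ∃ A1 A2 : ℕ, 0 < A1 ∧ 0 < A2 ∧ Nat.Coprime A1 A2 ∧
      ((c ^ k - b ^ k = 2 ^ (2 * k - 1) * A1 ^ (2 * k) ∧
          c ^ k + b ^ k = 2 * A2 ^ (2 * k)) ∨
        (c ^ k - b ^ k = 2 * A1 ^ (2 * k) ∧
          c ^ k + b ^ k = 2 ^ (2 * k - 1) * A2 ^ (2 * k))) ∧
      a = 2 * A1 * A2 :=
  stmt_13_general a b c k ha hk hbc hbodd hcodd h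
end

section
/- For integers a, b and k ≥ 1, the alternating sum a^(2k) - a^(2k-1) b + a^(2k-2) b^2 - ... + b^(2k) can be written as a polynomial in (a+b)^2 and ab of the form (a+b)^(2k) + q1*(a+b)^(2k-2)*(ab) + ... + q_{k-1}*(a+b)^2*(ab)^(k-1) + (2k+1)*(-ab)^k for suitable integers q1, ..., q_{k-1}; in particular, (a^(2k+1)+b^(2k+1))/(a+b) ≡ (2k+1)*(-ab)^k (mod (a+b)^2). -/
/-!
Put `S = (a + b)²`, `P = ab` and `e_k = a^(2k+1) + b^(2k+1)`. Since `a² + b² = S - 2P`, the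
sequence satisfies `e_(k+2) = (S - 2P) e_(k+1) - P² e_k`, so `e_k / (a + b) = S^k f_k(P / S)`
for the polynomials `f_0 = 1`, `f_1 = 1 - 3X`, `f_(k+2) = (1 - 2X) f_(k+1) - X² f_k`. Each `f_k`
has degree at most `k`, constant term `1` and `X^k`-coefficient `(2k+1)(-1)^k`, which read off under
homogenisation as the terms `S^k` and `(2k+1)(-P)^k`; all other terms are divisible by `S`.
-/

open Finset Polynomial

theorem add_mul_sum_range_alternating {R : Type*} [CommRing R] (a b : R) (k : ℕ) :
    (a + b) * ∑ i ∈ range (2 * k + 1), (-1) ^ i * a ^ (2 * k - i) * b ^ i =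
      a ^ (2 * k + 1) + b ^ (2 * k + 1) := by
  have h := geom_sum₂_mul (-b) a (2 * k + 1)
  rw [Odd.neg_pow ⟨k, rfl⟩] at h
  have hs : ∑ i ∈ range (2 * k + 1), (-b) ^ i * a ^ (2 * k + 1 - 1 - i) =
      ∑ i ∈ range (2 * k + 1), (-1) ^ i * a ^ (2 * k - i) * b ^ i :=
    sum_congr rfl fun i _ => by rw [Nat.add_sub_cancel, neg_pow]; ring
  rw [hs] at h
  linear_combination -h

theorem sum_coeff_smul_pow_mul_pow_eq_pow_mul_aeval {R A : Type*} [CommSemiring R]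
    [CommSemiring A] [Algebra R A] {p : R[X]} {k : ℕ} (hp : p.natDegree ≤ k) {S t P : A}
    (h : S * t = P) :
    ∑ i ∈ range (k + 1), p.coeff i • (S ^ (k - i) * P ^ i) = S ^ k * aeval t p := by
  rw [aeval_eq_sum_range' (Nat.lt_succ_of_le hp), mul_sum]
  refine sum_congr rfl fun i hi => ?_
  rw [← h, mul_pow, ← mul_assoc, ← pow_add,
    Nat.sub_add_cancel (Nat.le_of_lt_succ (mem_range.1 hi)), mul_smul_comm]

noncomputable def oddPowQuotPoly : ℕ → ℤ[X]
  | 0 => 1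
  | 1 => 1 - 3 * X
  | k + 2 => (1 - 2 * X) * oddPowQuotPoly (k + 1) - X ^ 2 * oddPowQuotPoly k

theorem natDegree_oddPowQuotPoly_le : ∀ k, (oddPowQuotPoly k).natDegree ≤ k
  | 0 => by simp [oddPowQuotPoly]
  | 1 => by simp only [oddPowQuotPoly]; compute_degree!
  | k + 2 => by
    have h1 := natDegree_oddPowQuotPoly_le (k + 1)
    have h0 := natDegree_oddPowQuotPoly_le k
    simp only [oddPowQuotPoly]
    refine (natDegree_sub_le _ _).trans (max_le ?_ ?_)
    · refine natDegree_mul_le.trans ?_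
      have : (1 - 2 * X : ℤ[X]).natDegree ≤ 1 := by compute_degree
      omega
    · refine natDegree_mul_le.trans ?_
      simp only [natDegree_X_pow]
      omega

theorem coeff_oddPowQuotPoly_zero : ∀ k, (oddPowQuotPoly k).coeff 0 = 1
  | 0 => by simp [oddPowQuotPoly]
  | 1 => by simp [oddPowQuotPoly]
  | k + 2 => by
    simp [oddPowQuotPoly, coeff_oddPowQuotPoly_zero (k + 1)]

theorem coeff_oddPowQuotPoly_self : ∀ k, (oddPowQuotPoly k).coeff k = (2 * k + 1) * (-1) ^ k
  | 0 => by simp [oddPowQuotPoly]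
  | 1 => by simp [oddPowQuotPoly, coeff_one]
  | k + 2 => by
    have hvanish : (oddPowQuotPoly (k + 1)).coeff (k + 2) = 0 :=
      coeff_eq_zero_of_natDegree_lt ((natDegree_oddPowQuotPoly_le _).trans_lt (by omega))
    simp only [oddPowQuotPoly, sub_mul, one_mul, coeff_sub, mul_assoc, coeff_X_pow_mul,
      coeff_X_mul, coeff_ofNat_mul, hvanish, coeff_oddPowQuotPoly_self (k + 1),
      coeff_oddPowQuotPoly_self k]
    push_cast
    ring

theorem add_mul_pow_mul_aeval_oddPowQuotPoly {A : Type*} [CommRing A] {a b t : A}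
    (ht : (a + b) ^ 2 * t = a * b) :
    ∀ k, (a + b) * ((a + b) ^ 2) ^ k * aeval t (oddPowQuotPoly k) =
      a ^ (2 * k + 1) + b ^ (2 * k + 1)
  | 0 => by simp [oddPowQuotPoly]
  | 1 => by
    simp only [oddPowQuotPoly, map_sub, map_mul, map_one, map_ofNat, aeval_X]
    linear_combination (-3 * (a + b)) * ht
  | k + 2 => by
    have h1 := add_mul_pow_mul_aeval_oddPowQuotPoly ht (k + 1)
    have h0 := add_mul_pow_mul_aeval_oddPowQuotPoly ht k
    simp only [oddPowQuotPoly, map_sub, map_mul, map_pow, map_one, map_ofNat, aeval_X]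
    linear_combination ((a + b) ^ 2 - 2 * (a * b)) * h1 - (a * b) ^ 2 * h0
      - 2 * (a + b) * ((a + b) ^ 2) ^ (k + 1) * aeval t (oddPowQuotPoly (k + 1)) * ht
      - (a + b) * ((a + b) ^ 2) ^ k * aeval t (oddPowQuotPoly k) * ((a + b) ^ 2 * t + a * b) * ht

theorem sum_alternating_eq_sum_coeff_oddPowQuotPoly {a b : ℤ} (hab : a + b ≠ 0) (k : ℕ) :
    ∑ i ∈ range (2 * k + 1), (-1) ^ i * a ^ (2 * k - i) * b ^ i =
      ∑ i ∈ range (k + 1),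
        (oddPowQuotPoly k).coeff i * ((a + b) ^ 2) ^ (k - i) * (a * b) ^ i := by
  refine mul_left_cancel₀ hab ((add_mul_sum_range_alternating a b k).trans ?_)
  have hS : ((a + b : ℚ)) ^ 2 ≠ 0 := pow_ne_zero _ (by exact_mod_cast hab)
  have ht : ((a + b : ℚ)) ^ 2 * (a * b / (a + b) ^ 2) = a * b := mul_div_cancel₀ _ hS
  have hhom := sum_coeff_smul_pow_mul_pow_eq_pow_mul_aeval (natDegree_oddPowQuotPoly_le k) ht
  have key := add_mul_pow_mul_aeval_oddPowQuotPoly ht k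
  simp only [zsmul_eq_mul, ← mul_assoc] at hhom
  rw [mul_assoc, ← hhom] at key
  exact_mod_cast key.symm

theorem sum_coeff_oddPowQuotPoly_eq {R : Type*} [CommRing R] (s P : R) {k : ℕ} (hk : 1 ≤ k) :
    ∑ i ∈ range (k + 1), ((oddPowQuotPoly k).coeff i : R) * (s ^ 2) ^ (k - i) * P ^ i =
      s ^ (2 * k) + ∑ i ∈ range (k - 1),
          ((oddPowQuotPoly k).coeff (i + 1) : R) * s ^ (2 * k - 2 * (i + 1)) * P ^ (i + 1) +
        (2 * k + 1) * (-P) ^ k := by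
  obtain ⟨m, rfl⟩ : ∃ m, k = m + 1 := ⟨k - 1, by omega⟩
  rw [sum_range_succ, sum_range_succ', Nat.sub_self, Nat.sub_zero, coeff_oddPowQuotPoly_zero,
    coeff_oddPowQuotPoly_self, neg_pow P]
  simp only [← pow_mul, Nat.mul_sub]
  push_cast
  ring

theorem stmt_15 (a b : ℤ) (k : ℕ) (hk : 1 ≤ k) (hab : a + b ≠ 0) :
    (∃ q : ℕ → ℤ,
      (∑ i ∈ Finset.range (2 * k + 1), (-1 : ℤ) ^ i * a ^ (2 * k - i) * b ^ i) =
        (a + b) ^ (2 * k) +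
          (∑ i ∈ Finset.range (k - 1),
            q i * (a + b) ^ (2 * k - 2 * (i + 1)) * (a * b) ^ (i + 1)) +
          (2 * k + 1) * (-(a * b)) ^ k) ∧
    ∀ Q : ℤ, a ^ (2 * k + 1) + b ^ (2 * k + 1) = (a + b) * Q →
      Q ≡ (2 * k + 1) * (-(a * b)) ^ k [ZMOD (a + b) ^ 2] := by
  have hform := (sum_alternating_eq_sum_coeff_oddPowQuotPoly hab k).trans
    (sum_coeff_oddPowQuotPoly_eq (a + b) (a * b) hk)
  refine ⟨⟨fun i => (oddPowQuotPoly k).coeff (i + 1), hform⟩, fun Q hQ => ?_⟩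
  have hQ_eq : Q = ∑ i ∈ range (2 * k + 1), (-1) ^ i * a ^ (2 * k - i) * b ^ i :=
    mul_left_cancel₀ hab (hQ.symm.trans (add_mul_sum_range_alternating a b k).symm)
  have hdvd : (a + b) ^ 2 ∣ (a + b) ^ (2 * k) + ∑ i ∈ range (k - 1),
      (oddPowQuotPoly k).coeff (i + 1) * (a + b) ^ (2 * k - 2 * (i + 1)) * (a * b) ^ (i + 1) := by
    refine dvd_add (pow_dvd_pow _ (by omega)) (dvd_sum fun i hi => ?_)
    have := mem_range.1 hi
    exact ((pow_dvd_pow _ (by omega)).mul_left _).mul_right _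
  rw [hQ_eq, hform]
  simpa using (Int.modEq_zero_iff_dvd.2 hdvd).add_right ((2 * k + 1) * (-(a * b)) ^ k)
end

section
/- Let p = 2k+1 be an odd prime and a, b, c pairwise coprime positive integers with a^p + b^p = c^p, and suppose p does not divide a*b*c. Then there exist positive integers a1, a2, b1, b2, c1, c2 with a = a1*a2, b = b1*b2, c = c1*c2, a + b = c1^p, c - a = b1^p, and c - b = a1^p. -/
/-!
For odd `p`, `x ^ p + y ^ p = (x + y) * S` with `S = ∑ xⁱ (-y)^(p-1-i)`, and modulo `x + y` the
cofactor `S` is congruent to `p * (-y) ^ (p - 1)`. Hence `x + y` and `S` are coprime as soon as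
`x` and `y` are and `p ∤ x + y`, which holds when `x + y ∣ z ^ p = x ^ p + y ^ p` and `p ∤ z`.
Coprime factors of a `p`-th power in `ℤ` are `p`-th powers up to sign, and the sign is absorbed
because `p` is odd. Applied to the triples `(a, b, c)`, `(c, -a, b)` and `(c, -b, a)` this gives
`a + b = c₁ ^ p`, `c - a = b₁ ^ p`, `c - b = a₁ ^ p` with `c₁ ∣ c`, `b₁ ∣ b`, `a₁ ∣ a`.
-/

open Finset

section CommRing

variable {R : Type*} [CommRing R]

theorem sub_dvd_geom_sum₂_sub (x y : R) (n : ℕ) :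
    x - y ∣ ∑ i ∈ range n, x ^ i * y ^ (n - 1 - i) - n * y ^ (n - 1) := by
  rw [← Ideal.mem_span_singleton, ← Ideal.Quotient.eq]
  have hxy : Ideal.Quotient.mk (Ideal.span {x - y}) x = Ideal.Quotient.mk _ y :=
    Ideal.Quotient.eq.mpr (Ideal.mem_span_singleton_self _)
  simp only [RingHom.map_geom_sum₂, hxy, geom_sum₂_self, map_mul, map_pow, map_natCast]

theorem isCoprime_sub_geom_sum₂ {x y : R} {n : ℕ} (hxy : IsCoprime x y)
    (hn : IsCoprime (x - y) n) :
    IsCoprime (x - y) (∑ i ∈ range n, x ^ i * y ^ (n - 1 - i)) := by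
  obtain ⟨k, hk⟩ := sub_dvd_geom_sum₂_sub x y n
  have hy : IsCoprime (x - y) y := by
    simpa using IsCoprime.sub_mul_right_left_iff (z := 1) |>.mpr hxy
  rw [sub_eq_iff_eq_add'.mp hk]
  exact (hn.mul_right (hy.pow_right)).add_mul_left_right k

end CommRing

theorem Int.exists_dvd_and_add_eq_pow {p : ℕ} (hp : p.Prime) (hodd : Odd p) {x y z : ℤ}
    (hxy : IsCoprime x y) (h : x ^ p + y ^ p = z ^ p) (hpz : ¬ (p : ℤ) ∣ z) :
    ∃ u, u ∣ z ∧ x + y = u ^ p := by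
  have hfac : (x + y) * ∑ i ∈ Finset.range p, x ^ i * (-y) ^ (p - 1 - i) = z ^ p := by
    rw [← h, mul_comm, ← sub_neg_eq_add x y, geom_sum₂_mul, hodd.neg_pow, sub_neg_eq_add]
  have hp' : Prime (p : ℤ) := Nat.prime_iff_prime_int.mp hp
  have hpxy : IsCoprime (x - -y) p := by
    rw [sub_neg_eq_add, isCoprime_comm, hp'.coprime_iff_not_dvd]
    exact fun hdvd => hpz (hp'.dvd_of_dvd_pow (hdvd.trans (Dvd.intro _ hfac)))
  have hcop := isCoprime_sub_geom_sum₂ hxy.neg_right hpxy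
  rw [sub_neg_eq_add] at hcop
  obtain ⟨u, hu⟩ := Int.eq_pow_of_mul_eq_pow_odd_left hcop hodd hfac
  exact ⟨u, (Int.pow_dvd_pow_iff hp.ne_zero).mp (hu ▸ Dvd.intro _ hfac), hu⟩

namespace Nat

variable {p x y z : ℕ}

theorem exists_dvd_and_add_eq_pow (hp : p.Prime) (hodd : Odd p) (hxy : x.Coprime y)
    (h : x ^ p + y ^ p = z ^ p) (hpz : ¬ p ∣ z) : ∃ w, w ∣ z ∧ x + y = w ^ p := by
  obtain ⟨u, huz, hu⟩ := Int.exists_dvd_and_add_eq_pow (z := z) hp hodd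
    (Nat.isCoprime_iff_coprime.mpr hxy) (by exact_mod_cast h) (by exact_mod_cast hpz)
  refine ⟨u.natAbs, Int.natAbs_dvd_natAbs.mpr huz, ?_⟩
  rw [← Int.natAbs_pow, ← hu, ← Nat.cast_add, Int.natAbs_natCast]

theorem exists_dvd_and_sub_eq_pow (hp : p.Prime) (hodd : Odd p) (hxz : x.Coprime z)
    (h : x ^ p + y ^ p = z ^ p) (hpy : ¬ p ∣ y) : ∃ w, w ∣ y ∧ z - x = w ^ p := by
  have hzp : (z : ℤ) ^ p + (-x) ^ p = y ^ p := by
    rw [hodd.neg_pow, ← sub_eq_add_neg, sub_eq_iff_eq_add']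
    exact_mod_cast h.symm
  obtain ⟨u, huy, hu⟩ := Int.exists_dvd_and_add_eq_pow hp hodd
    (Nat.isCoprime_iff_coprime.mpr hxz).symm.neg_right hzp (by exact_mod_cast hpy)
  have hxz : x ≤ z := (Nat.pow_le_pow_iff_left hp.ne_zero).mp (h ▸ Nat.le_add_right _ _)
  refine ⟨u.natAbs, Int.natAbs_dvd_natAbs.mpr huy, ?_⟩
  rw [← Int.natAbs_pow, ← hu, ← sub_eq_add_neg, ← Nat.cast_sub hxz, Int.natAbs_natCast]

end Nat

theorem stmt_16 (p a b c : ℕ) (hp : p.Prime) (hodd : Odd p)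
    (ha : 0 < a) (hb : 0 < b) (hc : 0 < c)
    (hab : Nat.Coprime a b) (hbc : Nat.Coprime b c) (hac : Nat.Coprime a c)
    (h : a ^ p + b ^ p = c ^ p) (hnd : ¬ p ∣ a * b * c) :
    ∃ a1 a2 b1 b2 c1 c2 : ℕ,
      0 < a1 ∧ 0 < a2 ∧ 0 < b1 ∧ 0 < b2 ∧ 0 < c1 ∧ 0 < c2 ∧
      a = a1 * a2 ∧ b = b1 * b2 ∧ c = c1 * c2 ∧
      a + b = c1 ^ p ∧ c - a = b1 ^ p ∧ c - b = a1 ^ p := by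
  have hpa : ¬ p ∣ a := fun hd => hnd ((hd.mul_right b).mul_right c)
  have hpb : ¬ p ∣ b := fun hd => hnd ((hd.mul_left a).mul_right c)
  have hpc : ¬ p ∣ c := fun hd => hnd (hd.mul_left (a * b))
  obtain ⟨c1, ⟨c2, hcc⟩, hc1⟩ := Nat.exists_dvd_and_add_eq_pow hp hodd hab h hpc
  obtain ⟨b1, ⟨b2, hbb⟩, hb1⟩ := Nat.exists_dvd_and_sub_eq_pow hp hodd hac h hpb
  obtain ⟨a1, ⟨a2, haa⟩, ha1⟩ :=
    Nat.exists_dvd_and_sub_eq_pow hp hodd hbc (by rwa [add_comm]) hpa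
  rw [haa, CanonicallyOrderedAdd.mul_pos] at ha
  rw [hbb, CanonicallyOrderedAdd.mul_pos] at hb
  rw [hcc, CanonicallyOrderedAdd.mul_pos] at hc
  exact ⟨a1, a2, b1, b2, c1, c2, ha.1, ha.2, hb.1, hb.2, hc.1, hc.2, haa, hbb, hcc, hc1, hb1, ha1⟩
end
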